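/- arXiv:0908.3157 — 5 statements merged into one kernel-verified Lean document; each statement's English description precedes it below -/
import Mathlib

section
/- Let ρ be a density matrix on ℂ^{dA} ⊗ ℂ^{dB}, let (v_j)_{j<dA} be an orthonormal basis of ℂ^{dA}, and set P_j = v_j v_j*. Then ρ = Σ_j (P_j ⊗ I_{dB}) ρ (P_j ⊗ I_{dB}) if and only if there exist nonnegative reals p_j with Σ_j p_j = 1 and dB×dB density matrices σ_j such that ρ = Σ_j p_j P_j ⊗ σ_j. (I.e., invariance of ρ under the local von Neumann measurement {P_j} is equivalent to the block-diagonal zero-discord form in that basis.) -/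
open Matrix MeasureTheory
open scoped Kronecker ComplexOrder

/-- A density matrix: positive semidefinite with unit trace. -/
def IsDensityMatrix {n : Type*} [Fintype n] (ρ : Matrix n n ℂ) : Prop :=
  ρ.PosSemidef ∧ ρ.trace = 1

/-- Partial trace over the second subsystem. -/
noncomputable def ptraceB {dA dB : ℕ} (ρ : Matrix (Fin dA × Fin dB) (Fin dA × Fin dB) ℂ) :
    Matrix (Fin dA) (Fin dA) ℂ :=
  Matrix.of fun a a' => ∑ b, ρ (a, b) (a', b)

/-- Zero-discord (classical-quantum) states: block diagonal in some
orthonormal local basis of the first subsystem. -/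
def IsZeroDiscord {dA dB : ℕ} (ρ : Matrix (Fin dA × Fin dB) (Fin dA × Fin dB) ℂ) : Prop :=
  ∃ (v : Fin dA → (Fin dA → ℂ)) (p : Fin dA → ℝ)
    (σ : Fin dA → Matrix (Fin dB) (Fin dB) ℂ),
      (∀ j k, star (v j) ⬝ᵥ v k = if j = k then 1 else 0) ∧
      (∀ j, 0 ≤ p j) ∧ (∑ j, p j = 1) ∧
      (∀ j, IsDensityMatrix (σ j)) ∧
      ρ = ∑ j, (p j : ℂ) • (Matrix.vecMulVec (v j) (star (v j)) ⊗ₖ σ j)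

/-! If `ρ` is invariant, it equals its pinching `∑ j, P j ⊗ M j`, where
`M j = (v j ⊗ 1)* ρ (v j ⊗ 1)` is positive semidefinite; dividing `M j` by its trace `p j` gives
`σ j`, and `∑ j, p j = tr ρ = 1` since `tr (P j) = 1`. Conversely `P k * P j * P k = δ j k • P k`
makes every `∑ j, P j ⊗ X j` a fixed point of the pinching. -/

namespace Matrix

section Algebra

variable {R m n : Type*} [CommSemiring R] [StarRing R]

/-- The map `x ↦ w ⊗ x`, as a matrix. -/
def colKroneckerOne (n : Type*) [DecidableEq n] (w : m → R) : Matrix (m × n) n R :=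
  of fun i b => w i.1 * (1 : Matrix n n R) i.2 b

theorem colKroneckerOne_mul_mul_conjTranspose [Fintype n] [DecidableEq n] (w : m → R)
    (X : Matrix n n R) :
    colKroneckerOne n w * X * (colKroneckerOne n w)ᴴ = vecMulVec w (star w) ⊗ₖ X := by
  ext ⟨a, b⟩ ⟨a', b'⟩
  simp [colKroneckerOne, mul_apply, one_apply, apply_ite star, vecMulVec_apply]
  ring

theorem vecMulVec_kronecker_one_mul_mul [Fintype m] [Fintype n] [DecidableEq n] (w : m → R)
    (ρ : Matrix (m × n) (m × n) R) :
    (vecMulVec w (star w) ⊗ₖ 1) * ρ * (vecMulVec w (star w) ⊗ₖ 1) =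
      vecMulVec w (star w) ⊗ₖ ((colKroneckerOne n w)ᴴ * ρ * colKroneckerOne n w) := by
  simp only [← colKroneckerOne_mul_mul_conjTranspose, Matrix.mul_one, Matrix.mul_assoc]

variable [Fintype m] [DecidableEq m] {v : m → m → R}

theorem vecMulVec_mul_mul_vecMulVec_of_orthonormal
    (hv : ∀ j k, star (v j) ⬝ᵥ v k = if j = k then 1 else 0) (j k : m) :
    vecMulVec (v k) (star (v k)) * vecMulVec (v j) (star (v j)) * vecMulVec (v k) (star (v k)) =
      if j = k then vecMulVec (v k) (star (v k)) else 0 := by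
  rw [vecMulVec_mul_vecMulVec, vecMulVec_mul_vecMulVec, smul_dotProduct, hv, hv]
  by_cases h : j = k
  · subst h
    simp
  · simp [h, Ne.symm h]

theorem trace_vecMulVec_kronecker_of_orthonormal [Fintype n]
    (hv : ∀ j k, star (v j) ⬝ᵥ v k = if j = k then 1 else 0) (j : m) (X : Matrix n n R) :
    trace (vecMulVec (v j) (star (v j)) ⊗ₖ X) = trace X := by
  rw [trace_kronecker, trace_vecMulVec, dotProduct_comm, hv, if_pos rfl, one_mul]

theorem sum_kronecker_one_mul_mul_of_orthonormal [Fintype n] [DecidableEq n]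
    (hv : ∀ j k, star (v j) ⬝ᵥ v k = if j = k then 1 else 0) (X : m → Matrix n n R) :
    ∑ k, (vecMulVec (v k) (star (v k)) ⊗ₖ 1) * (∑ j, vecMulVec (v j) (star (v j)) ⊗ₖ X j) *
      (vecMulVec (v k) (star (v k)) ⊗ₖ 1) = ∑ j, vecMulVec (v j) (star (v j)) ⊗ₖ X j := by
  refine Finset.sum_congr rfl fun k _ => ?_
  simp_rw [Finset.mul_sum, Finset.sum_mul, ← mul_kronecker_mul, Matrix.one_mul, Matrix.mul_one,
    vecMulVec_mul_mul_vecMulVec_of_orthonormal hv]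
  rw [Finset.sum_eq_single k (fun j _ hjk => by simp [hjk]) (by simp), if_pos rfl]

end Algebra

section Density

variable {n : Type*} [Fintype n] [DecidableEq n]

theorem isDensityMatrix_inv_card_smul_one [Nonempty n] :
    IsDensityMatrix ((Fintype.card n : ℂ)⁻¹ • (1 : Matrix n n ℂ)) := by
  refine ⟨PosSemidef.one.smul (by positivity), ?_⟩
  rw [trace_smul, trace_one, smul_eq_mul, inv_mul_cancel₀ (by simp)]

theorem PosSemidef.exists_isDensityMatrix_eq_smul [Nonempty n] {M : Matrix n n ℂ}
    (hM : M.PosSemidef) : ∃ σ, IsDensityMatrix σ ∧ M = (M.trace.re : ℂ) • σ := by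
  have htrace : (M.trace.re : ℂ) = M.trace :=
    (Complex.eq_re_of_ofReal_le (r := 0) (by simpa using hM.trace_nonneg)).symm
  by_cases h0 : M.trace = 0
  · refine ⟨_, isDensityMatrix_inv_card_smul_one, ?_⟩
    rw [htrace, h0, zero_smul, ← hM.trace_eq_zero_iff, h0]
  · refine ⟨M.trace⁻¹ • M, ⟨hM.smul ?_, ?_⟩, ?_⟩
    · exact inv_nonneg.mpr hM.trace_nonneg
    · rw [trace_smul, smul_eq_mul, inv_mul_cancel₀ h0]
    · rw [htrace, smul_smul, mul_inv_cancel₀ h0, one_smul]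

end Density

end Matrix

theorem measurement_invariance_iff_block_diagonal_general (dA dB : ℕ) (hdB : 0 < dB)
    (ρ : Matrix (Fin dA × Fin dB) (Fin dA × Fin dB) ℂ) (hρ : IsDensityMatrix ρ)
    (v : Fin dA → (Fin dA → ℂ))
    (hv : ∀ j k, star (v j) ⬝ᵥ v k = if j = k then 1 else 0) :
    (ρ = ∑ j, (Matrix.vecMulVec (v j) (star (v j)) ⊗ₖ (1 : Matrix (Fin dB) (Fin dB) ℂ)) * ρ *
        (Matrix.vecMulVec (v j) (star (v j)) ⊗ₖ (1 : Matrix (Fin dB) (Fin dB) ℂ))) ↔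
    (∃ (p : Fin dA → ℝ) (σ : Fin dA → Matrix (Fin dB) (Fin dB) ℂ),
      (∀ j, 0 ≤ p j) ∧ (∑ j, p j = 1) ∧ (∀ j, IsDensityMatrix (σ j)) ∧
      ρ = ∑ j, (p j : ℂ) • (Matrix.vecMulVec (v j) (star (v j)) ⊗ₖ σ j)) := by
  have : Nonempty (Fin dB) := ⟨⟨0, hdB⟩⟩
  set M := fun j => (colKroneckerOne (Fin dB) (v j))ᴴ * ρ * colKroneckerOne (Fin dB) (v j)
  have hM : ∀ j, (M j).PosSemidef := fun j => hρ.1.conjTranspose_mul_mul_same _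
  constructor
  · intro hinv
    have hρM : ρ = ∑ j, vecMulVec (v j) (star (v j)) ⊗ₖ M j := by
      rw [hinv]
      exact Finset.sum_congr rfl fun j _ => vecMulVec_kronecker_one_mul_mul _ _
    choose σ hσ hMσ using fun j => (hM j).exists_isDensityMatrix_eq_smul
    refine ⟨fun j => (M j).trace.re, σ, fun j => ?_, ?_, hσ, ?_⟩
    · exact (Complex.nonneg_iff.mp (hM j).trace_nonneg).1
    · have htrace := hρ.2
      rw [hρM, trace_sum] at htrace
      simp_rw [trace_vecMulVec_kronecker_of_orthonormal hv] at htrace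
      simpa [Complex.re_sum] using congrArg Complex.re htrace
    · conv_lhs => rw [hρM]
      simp_rw [← kronecker_smul, ← hMσ]
  · rintro ⟨p, σ, -, -, -, hρσ⟩
    simp_rw [hρσ, ← kronecker_smul]
    exact (sum_kronecker_one_mul_mul_of_orthonormal hv _).symm

/-- A density matrix is invariant under a local von Neumann
measurement `{P_j = v_j v_j*}` on `A` if and only if it has the block-diagonal
zero-discord form `Σ_j p_j P_j ⊗ σ_j` in that basis. -/
theorem measurement_invariance_iff_block_diagonal (dA dB : ℕ) (hdA : 0 < dA) (hdB : 0 < dB)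
    (ρ : Matrix (Fin dA × Fin dB) (Fin dA × Fin dB) ℂ) (hρ : IsDensityMatrix ρ)
    (v : Fin dA → (Fin dA → ℂ))
    (hv : ∀ j k, star (v j) ⬝ᵥ v k = if j = k then 1 else 0) :
    (ρ = ∑ j, (Matrix.vecMulVec (v j) (star (v j)) ⊗ₖ (1 : Matrix (Fin dB) (Fin dB) ℂ)) * ρ *
        (Matrix.vecMulVec (v j) (star (v j)) ⊗ₖ (1 : Matrix (Fin dB) (Fin dB) ℂ))) ↔
    (∃ (p : Fin dA → ℝ) (σ : Fin dA → Matrix (Fin dB) (Fin dB) ℂ),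
      (∀ j, 0 ≤ p j) ∧ (∑ j, p j = 1) ∧ (∀ j, IsDensityMatrix (σ j)) ∧
      ρ = ∑ j, (p j : ℂ) • (Matrix.vecMulVec (v j) (star (v j)) ⊗ₖ σ j)) :=
  measurement_invariance_iff_block_diagonal_general dA dB hdB ρ hρ v hv
end

section
/- Assume dA ≥ 2 and dB ≥ 2. Let V be the finite-dimensional real vector space of traceless Hermitian d×d complex matrices (indexed by Fin dA × Fin dB) and let μ be an additive Haar measure on V. Then the set {X ∈ V : [I/d + X, (Tr_B(I/d + X)) ⊗ I_{dB}] = 0} is a μ-null set. In particular, the set C₀ of density matrices commuting with their reduced state has measure zero within the affine space of Hermitian trace-one matrices. -/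
open Matrix MeasureTheory
open scoped Kronecker ComplexOrder

/-- The real vector space of traceless Hermitian `d × d` matrices. -/
noncomputable def tracelessHermitian (dA dB : ℕ) :
    Submodule ℝ (Matrix (Fin dA × Fin dB) (Fin dA × Fin dB) ℂ) where
  carrier := {X | X.IsHermitian ∧ X.trace = 0}
  add_mem' := fun ha hb => ⟨ha.1.add hb.1, by simp [Matrix.trace_add, ha.2, hb.2]⟩
  zero_mem' := ⟨Matrix.isHermitian_zero, by simp⟩
  smul_mem' := fun c X hX =>
    ⟨by rw [Matrix.IsHermitian, Matrix.conjTranspose_smul, star_trivial, hX.1.eq],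
     by rw [Matrix.trace_smul, hX.2, smul_zero]⟩

/-!
Along a line `X + t • W`, the commutator `[ρ, Tr_B ρ ⊗ I]` of `ρ = I/d + X + t • W` is a
quadratic polynomial in `t` with leading coefficient `[W, Tr_B W ⊗ I]`. For `W = Z ⊗ I + X ⊗ Z`,
built from Pauli matrices on two basis vectors of each factor, this coefficient is
`dB • ([X, Z] ⊗ Z) ≠ 0`, so every line parallel to `W` meets the set in at most two points.
Disintegrating the Haar measure along these lines shows that the set is null.
-/

theorem MeasureTheory.Measure.addHaar_eq_zero_of_countable_lineSlices
    {E : Type*} [AddCommGroup E] [Module ℝ E] [TopologicalSpace E] [IsTopologicalAddGroup E]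
    [ContinuousSMul ℝ E] [T2Space E] [FiniteDimensional ℝ E] [MeasurableSpace E] [BorelSpace E]
    (μ : Measure E) [μ.IsAddHaarMeasure] {S : Set E} (hS : MeasurableSet S) (v : E)
    (hline : ∀ x, {t : ℝ | x + t • v ∈ S}.Countable) : μ S = 0 := by
  let e : E ≃L[ℝ] (Fin (Module.finrank ℝ E) → ℝ) :=
    (Module.finBasis ℝ E).equivFun.toContinuousLinearEquiv
  have : (μ.map e).IsAddHaarMeasure := e.isAddHaarMeasure_map μ
  have hS' : MeasurableSet (e.symm ⁻¹' Sᶜ) := e.symm.continuous.measurable hS.compl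
  have hae : ∀ᵐ y ∂(μ.map e), y ∈ e.symm ⁻¹' Sᶜ := by
    refine ae_mem_of_ae_add_linearMap_mem (LinearMap.toSpanSingleton ℝ _ (e v)) volume _ hS'
      fun y => ?_
    refine (measure_eq_zero_iff_ae_notMem.1 ((hline (e.symm y)).measure_zero volume)).mono
      fun t ht => ?_
    simpa using ht
  simpa [measure_eq_zero_iff_ae_notMem] using (ae_map_iff e.continuous.aemeasurable hS').1 hae

open Polynomial in
theorem LinearMap.finite_setOf_eq_zero_along_line {K M N : Type*} [Field K] [AddCommGroup M]
    [Module K M] [AddCommGroup N] [Module K N] (B : M →ₗ[K] M →ₗ[K] N) (x v : M)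
    (hv : B v v ≠ 0) : {t : K | B (x + t • v) (x + t • v) = 0}.Finite := by
  obtain ⟨φ, hφ⟩ := Module.Projective.exists_dual_ne_zero K hv
  let p : K[X] := C (φ (B x x)) + C (φ (B x v + B v x)) * X + C (φ (B v v)) * X ^ 2
  have hp : p ≠ 0 := fun h => hφ (by simpa [p] using congrArg (coeff · 2) h)
  refine (finite_setOfPred_isRoot hp).subset fun t ht => ?_
  have := congrArg φ ht
  simp only [map_add, map_smul, LinearMap.add_apply, LinearMap.smul_apply, smul_eq_mul,
    map_zero] at this
  simp only [Set.mem_ofPred_eq, IsRoot, p, eval_add, eval_mul, eval_C, eval_X, eval_pow, map_add]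
  linear_combination this

section PTrace

variable {dA dB : ℕ}

lemma ptraceB_add (ρ σ : Matrix (Fin dA × Fin dB) (Fin dA × Fin dB) ℂ) :
    ptraceB (ρ + σ) = ptraceB ρ + ptraceB σ := by
  ext a a'
  simp [ptraceB, Finset.sum_add_distrib]

lemma ptraceB_smul {R : Type*} [DistribSMul R ℂ] (r : R)
    (ρ : Matrix (Fin dA × Fin dB) (Fin dA × Fin dB) ℂ) :
    ptraceB (r • ρ) = r • ptraceB ρ := by
  ext a a'
  simp [ptraceB, Finset.smul_sum]

lemma ptraceB_kronecker (M : Matrix (Fin dA) (Fin dA) ℂ) (N : Matrix (Fin dB) (Fin dB) ℂ) :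
    ptraceB (M ⊗ₖ N) = N.trace • M := by
  ext a a'
  simp [ptraceB, trace, Finset.mul_sum, mul_comm]

variable (dA dB) in
noncomputable def ptraceBKronOne :
    Matrix (Fin dA × Fin dB) (Fin dA × Fin dB) ℂ →ₗ[ℝ]
      Matrix (Fin dA × Fin dB) (Fin dA × Fin dB) ℂ where
  toFun ρ := ptraceB ρ ⊗ₖ (1 : Matrix (Fin dB) (Fin dB) ℂ)
  map_add' ρ σ := by rw [ptraceB_add, add_kronecker]
  map_smul' r ρ := by rw [ptraceB_smul, smul_kronecker, RingHom.id_apply]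

variable (dA dB) in
/-- The polarization `(ρ, σ) ↦ [ρ, Tr_B σ ⊗ I]` of the commutator defining `C₀`. -/
noncomputable def reducedCommutator :
    Matrix (Fin dA × Fin dB) (Fin dA × Fin dB) ℂ →ₗ[ℝ]
      Matrix (Fin dA × Fin dB) (Fin dA × Fin dB) ℂ →ₗ[ℝ]
        Matrix (Fin dA × Fin dB) (Fin dA × Fin dB) ℂ :=
  (LinearMap.mul ℝ (Matrix (Fin dA × Fin dB) (Fin dA × Fin dB) ℂ)
    - (LinearMap.mul ℝ _).flip).compl₂ (ptraceBKronOne dA dB)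

lemma reducedCommutator_apply (ρ σ : Matrix (Fin dA × Fin dB) (Fin dA × Fin dB) ℂ) :
    reducedCommutator dA dB ρ σ = ρ * (ptraceB σ ⊗ₖ 1) - (ptraceB σ ⊗ₖ 1) * ρ :=
  rfl

end PTrace

section Pauli

variable {n : ℕ} (i j : Fin n)

-- The Pauli matrices `Z` and `X` on the span of `eᵢ, eⱼ`, extended by zero.
def pauliZ : Matrix (Fin n) (Fin n) ℂ :=
  diagonal (Pi.single i 1 - Pi.single j 1)

def pauliX : Matrix (Fin n) (Fin n) ℂ :=
  single i j 1 + single j i 1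

lemma isHermitian_pauliZ : (pauliZ i j).IsHermitian :=
  isHermitian_diagonal_of_self_adjoint _ (by simp [IsSelfAdjoint])

lemma isHermitian_pauliX : (pauliX i j).IsHermitian := by
  simp [pauliX, IsHermitian, conjTranspose_add, add_comm]

lemma trace_pauliZ : (pauliZ i j).trace = 0 := by
  simp [pauliZ, trace_diagonal, Finset.sum_sub_distrib]

variable {i j}

lemma pauliZ_apply_self (hij : i ≠ j) : pauliZ i j i i = 1 := by
  simp [pauliZ, hij]

lemma commutator_pauliX_pauliZ_apply (hij : i ≠ j) :
    (pauliX i j * pauliZ i j - pauliZ i j * pauliX i j) i j = -2 := by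
  simp [pauliX, pauliZ, hij, hij.symm, add_mul, mul_add]
  norm_num

end Pauli

lemma Matrix.IsHermitian.kronecker {R l m : Type*} [CommMagma R] [StarMul R]
    {A : Matrix l l R} {B : Matrix m m R}
    (hA : A.IsHermitian) (hB : B.IsHermitian) : (A ⊗ₖ B).IsHermitian := by
  rw [IsHermitian, conjTranspose_kronecker, hA.eq, hB.eq]

section Witness

variable {dA dB : ℕ}

lemma reducedCommutator_kronecker_one_add_kronecker (M N : Matrix (Fin dA) (Fin dA) ℂ)
    {D : Matrix (Fin dB) (Fin dB) ℂ} (hD : D.trace = 0) :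
    reducedCommutator dA dB (M ⊗ₖ 1 + N ⊗ₖ D) (M ⊗ₖ 1 + N ⊗ₖ D)
      = (dB : ℂ) • ((N * M - M * N) ⊗ₖ D) := by
  have hρ : ptraceB (M ⊗ₖ 1 + N ⊗ₖ D) = (dB : ℂ) • M := by
    simp [ptraceB_add, ptraceB_kronecker, hD]
  rw [reducedCommutator_apply, hρ, smul_kronecker, Matrix.mul_smul, Matrix.smul_mul, ← smul_sub]
  simp only [add_mul, mul_add, ← mul_kronecker_mul, Matrix.mul_one, Matrix.one_mul]
  congr 1
  ext
  simp [sub_mul]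

lemma exists_mem_tracelessHermitian_reducedCommutator_ne_zero (hdA : 2 ≤ dA) (hdB : 2 ≤ dB) :
    ∃ W ∈ tracelessHermitian dA dB, reducedCommutator dA dB W W ≠ 0 := by
  let a₀ : Fin dA := ⟨0, by omega⟩
  let a₁ : Fin dA := ⟨1, by omega⟩
  let b₀ : Fin dB := ⟨0, by omega⟩
  let b₁ : Fin dB := ⟨1, by omega⟩
  have ha : a₀ ≠ a₁ := by simp [a₀, a₁, Fin.ext_iff]
  have hb : b₀ ≠ b₁ := by simp [b₀, b₁, Fin.ext_iff]
  refine ⟨pauliZ a₀ a₁ ⊗ₖ 1 + pauliX a₀ a₁ ⊗ₖ pauliZ b₀ b₁,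
    ⟨((isHermitian_pauliZ a₀ a₁).kronecker isHermitian_one).add
      ((isHermitian_pauliX a₀ a₁).kronecker (isHermitian_pauliZ b₀ b₁)), ?_⟩, fun h => ?_⟩
  · simp [trace_kronecker, trace_pauliZ]
  · rw [reducedCommutator_kronecker_one_add_kronecker _ _ (trace_pauliZ b₀ b₁)] at h
    have := congrFun₂ h (a₀, b₀) (a₁, b₀)
    simp only [Matrix.smul_apply, kronecker_apply, commutator_pauliX_pauliZ_apply ha,
      pauliZ_apply_self hb, Matrix.zero_apply, smul_eq_mul] at this
    norm_num at this
    omega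

end Witness

lemma continuous_reducedCommutator_self {dA dB : ℕ} :
    Continuous fun ρ => reducedCommutator dA dB ρ ρ := by
  have hK := (ptraceBKronOne dA dB).continuous_of_finiteDimensional
  exact (continuous_id.mul hK).sub (hK.mul continuous_id)

/-- For `dA, dB ≥ 2`, the set of traceless Hermitian
perturbations `X` such that `I/d + X` commutes with its reduced state
(tensored with the identity) is a null set for any additive Haar measure on
the space of traceless Hermitian matrices; hence `C₀` has measure zero within
the affine space of Hermitian trace-one matrices. -/
theorem C0_measure_zero (dA dB : ℕ) (hdA : 2 ≤ dA) (hdB : 2 ≤ dB)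
    [MeasurableSpace (tracelessHermitian dA dB)]
    [BorelSpace (tracelessHermitian dA dB)]
    (μ : Measure (tracelessHermitian dA dB)) [μ.IsAddHaarMeasure] :
    μ {X : tracelessHermitian dA dB |
      ((((dA * dB : ℕ) : ℂ))⁻¹ • (1 : Matrix (Fin dA × Fin dB) (Fin dA × Fin dB) ℂ)
          + (X : Matrix (Fin dA × Fin dB) (Fin dA × Fin dB) ℂ)) *
        (ptraceB ((((dA * dB : ℕ) : ℂ))⁻¹ • 1 + (X : Matrix (Fin dA × Fin dB) (Fin dA × Fin dB) ℂ))
          ⊗ₖ (1 : Matrix (Fin dB) (Fin dB) ℂ)) =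
      (ptraceB ((((dA * dB : ℕ) : ℂ))⁻¹ • 1 + (X : Matrix (Fin dA × Fin dB) (Fin dA × Fin dB) ℂ))
          ⊗ₖ (1 : Matrix (Fin dB) (Fin dB) ℂ)) *
        ((((dA * dB : ℕ) : ℂ))⁻¹ • (1 : Matrix (Fin dA × Fin dB) (Fin dA × Fin dB) ℂ)
          + (X : Matrix (Fin dA × Fin dB) (Fin dA × Fin dB) ℂ))} = 0 := by
  let ρ (X : tracelessHermitian dA dB) : Matrix (Fin dA × Fin dB) (Fin dA × Fin dB) ℂ :=
    (((dA * dB : ℕ) : ℂ))⁻¹ • 1 + X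
  obtain ⟨W, hW, hWW⟩ := exists_mem_tracelessHermitian_reducedCommutator_ne_zero hdA hdB
  have hnull : μ {X | reducedCommutator dA dB (ρ X) (ρ X) = 0} = 0 := by
    refine Measure.addHaar_eq_zero_of_countable_lineSlices μ ?_ ⟨W, hW⟩ fun X => ?_
    · exact (isClosed_eq (continuous_reducedCommutator_self.comp
        (continuous_const.add continuous_subtype_val)) continuous_const).measurableSet
    · refine (LinearMap.finite_setOf_eq_zero_along_line _ (ρ X) W hWW).countable.mono
        fun t ht => ?_
      have hρ : ρ (X + t • ⟨W, hW⟩) = ρ X + t • W := by simp [ρ, add_assoc]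
      rw [Set.mem_ofPred_eq, ← hρ]
      exact ht
  exact measure_mono_null (fun X hX => sub_eq_zero.2 hX) hnull
end

section
/- The set Ω₀ of zero-discord states is star-shaped with respect to the maximally mixed state: if ρ ∈ Ω₀ and t ∈ [0,1], then (1−t)·ρ + t·(I/d) ∈ Ω₀. Consequently, Ω₀ is a path-connected subset of the space of d×d complex matrices. -/
open Matrix MeasureTheory
open scoped Kronecker ComplexOrder


/-!
In a fixed orthonormal basis `(vⱼ)` of the first factor, the maximally mixed state is
`∑ⱼ (1/dA) |vⱼ⟩⟨vⱼ| ⊗ (I/dB)`, because `∑ⱼ |vⱼ⟩⟨vⱼ| = I`. Two classical-quantum states in the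
same basis can be mixed block by block: `a pⱼ σⱼ + b p'ⱼ σ'ⱼ` is `(a pⱼ + b p'ⱼ)` times a density
matrix. Hence the segment from a zero-discord state `ρ` to `I/d` stays in `Ω₀`, written in the basis
of `ρ`, so `Ω₀` is star-shaped about `I/d` and therefore path-connected.
-/

namespace Matrix

theorem sum_kronecker {ι l m n p α : Type*} [NonUnitalNonAssocSemiring α] (s : Finset ι)
    (A : ι → Matrix l m α) (B : Matrix n p α) :
    (∑ j ∈ s, A j) ⊗ₖ B = ∑ j ∈ s, A j ⊗ₖ B := by
  ext ⟨i, k⟩ ⟨i', k'⟩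
  simp [sum_apply, Finset.sum_mul]

theorem sum_vecMulVec_star_eq_one {m : Type*} [Fintype m] [DecidableEq m] {v : m → m → ℂ}
    (hv : ∀ j k, star (v j) ⬝ᵥ v k = if j = k then 1 else 0) :
    ∑ j, vecMulVec (v j) (star (v j)) = 1 := by
  -- The `v j` are the columns of `U`: orthonormality says `Uᴴ * U = 1`, and the sum is `U * Uᴴ`.
  let U : Matrix m m ℂ := of fun i j => v j i
  have hU : Uᴴ * U = 1 := by
    ext j k
    simpa [U, mul_apply, dotProduct, one_apply] using hv j k
  have hU' : U * Uᴴ = 1 := mul_eq_one_comm.mp hU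
  ext i i'
  simpa [U, mul_apply, sum_apply, vecMulVec_apply, Complex.star_def] using
    congrArg (fun M => M i i') hU'

end Matrix

namespace IsDensityMatrix

variable {n : Type*} [Fintype n]

theorem exists_smul_eq_add {σ τ : Matrix n n ℂ} (hσ : IsDensityMatrix σ)
    (hτ : IsDensityMatrix τ) {a b : ℝ} (ha : 0 ≤ a) (hb : 0 ≤ b) :
    ∃ ω, IsDensityMatrix ω ∧ (a : ℂ) • σ + (b : ℂ) • τ = ((a + b : ℝ) : ℂ) • ω := by
  rcases (add_nonneg ha hb).eq_or_lt with hab | hab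
  · obtain ⟨rfl, rfl⟩ : a = 0 ∧ b = 0 := (add_eq_zero_iff_of_nonneg ha hb).mp hab.symm
    exact ⟨σ, hσ, by simp⟩
  have hab' : ((a + b : ℝ) : ℂ) ≠ 0 := by exact_mod_cast hab.ne'
  have hnn : ∀ c : ℝ, 0 ≤ c → (0 : ℂ) ≤ c := fun c hc => by exact_mod_cast hc
  refine ⟨((a + b : ℝ) : ℂ)⁻¹ • ((a : ℂ) • σ + (b : ℂ) • τ), ⟨?_, ?_⟩,
    (smul_inv_smul₀ hab' _).symm⟩
  · exact ((hσ.1.smul (hnn a ha)).add (hτ.1.smul (hnn b hb))).smul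
      (by simpa using hnn _ (inv_nonneg.2 hab.le))
  · rw [trace_smul, trace_add, trace_smul, trace_smul, hσ.2, hτ.2, smul_eq_mul]
    field_simp
    push_cast
    ring

theorem maximallyMixed [DecidableEq n] [Nonempty n] :
    IsDensityMatrix ((Fintype.card n : ℂ)⁻¹ • (1 : Matrix n n ℂ)) := by
  refine ⟨PosSemidef.one.smul (by positivity), ?_⟩
  rw [trace_smul, trace_one, smul_eq_mul, inv_mul_cancel₀ (by simp)]

end IsDensityMatrix

section ClassicalQuantum

variable {m n : Type*} [Fintype m] [Fintype n]

/-- `IsZeroDiscord ρ` says, by definition, that `ρ = cqState v p σ` for an orthonormal `v`,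
probabilities `p` and density matrices `σ`. -/
def cqState (v : m → m → ℂ) (p : m → ℝ) (σ : m → Matrix n n ℂ) :
    Matrix (m × n) (m × n) ℂ :=
  ∑ j, (p j : ℂ) • (vecMulVec (v j) (star (v j)) ⊗ₖ σ j)

theorem exists_smul_cqState_add_smul_cqState (v : m → m → ℂ) {p p' : m → ℝ}
    {σ σ' : m → Matrix n n ℂ} (hp : ∀ j, 0 ≤ p j) (hp' : ∀ j, 0 ≤ p' j)
    (hσ : ∀ j, IsDensityMatrix (σ j)) (hσ' : ∀ j, IsDensityMatrix (σ' j))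
    {a b : ℝ} (ha : 0 ≤ a) (hb : 0 ≤ b) :
    ∃ ω : m → Matrix n n ℂ, (∀ j, IsDensityMatrix (ω j)) ∧
      (a : ℂ) • cqState v p σ + (b : ℂ) • cqState v p' σ' = cqState v (a • p + b • p') ω := by
  choose ω hω heq using fun j =>
    (hσ j).exists_smul_eq_add (hσ' j) (mul_nonneg ha (hp j)) (mul_nonneg hb (hp' j))
  refine ⟨ω, hω, ?_⟩
  simp only [cqState, Finset.smul_sum, ← Finset.sum_add_distrib]
  refine Finset.sum_congr rfl fun j _ => ?_
  simp only [smul_smul, ← kronecker_smul, ← kronecker_add, ← Complex.ofReal_mul, heq j,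
    Pi.add_apply, Pi.smul_apply, smul_eq_mul]

theorem cqState_maximallyMixed [DecidableEq m] [DecidableEq n] {v : m → m → ℂ}
    (hv : ∀ j k, star (v j) ⬝ᵥ v k = if j = k then 1 else 0) :
    cqState v (fun _ => (Fintype.card m : ℝ)⁻¹)
        (fun _ => (Fintype.card n : ℂ)⁻¹ • (1 : Matrix n n ℂ)) =
      ((Fintype.card m * Fintype.card n : ℕ) : ℂ)⁻¹ • 1 := by
  simp only [cqState, ← smul_kronecker, ← sum_kronecker, ← Finset.smul_sum,
    sum_vecMulVec_star_eq_one hv]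
  rw [smul_kronecker, kronecker_smul, one_kronecker_one, smul_smul]
  push_cast
  rw [mul_inv]

end ClassicalQuantum

section ZeroDiscord

variable {dA dB : ℕ}

theorem cqState_fin_maximallyMixed {v : Fin dA → Fin dA → ℂ}
    (hv : ∀ j k, star (v j) ⬝ᵥ v k = if j = k then 1 else 0) :
    cqState v (fun _ => (dA : ℝ)⁻¹) (fun _ => (dB : ℂ)⁻¹ • (1 : Matrix (Fin dB) (Fin dB) ℂ)) =
      ((dA * dB : ℕ) : ℂ)⁻¹ • 1 := by
  simpa only [Fintype.card_fin] using cqState_maximallyMixed (n := Fin dB) hv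

theorem isDensityMatrix_fin_maximallyMixed (hdB : 0 < dB) :
    IsDensityMatrix ((dB : ℂ)⁻¹ • (1 : Matrix (Fin dB) (Fin dB) ℂ)) := by
  have : NeZero dB := ⟨hdB.ne'⟩
  simpa only [Fintype.card_fin] using IsDensityMatrix.maximallyMixed (n := Fin dB)

theorem isZeroDiscord_maximallyMixed (hdA : 0 < dA) (hdB : 0 < dB) :
    IsZeroDiscord
      (((dA * dB : ℕ) : ℂ)⁻¹ • (1 : Matrix (Fin dA × Fin dB) (Fin dA × Fin dB) ℂ)) := by
  have hv : ∀ j k : Fin dA,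
      star (Pi.single j (1 : ℂ)) ⬝ᵥ Pi.single k 1 = if j = k then 1 else 0 := by
    intro j k
    simp [Pi.single_apply, eq_comm]
  rw [← cqState_fin_maximallyMixed hv]
  refine ⟨_, _, _, hv, fun _ => by positivity, ?_, fun _ => isDensityMatrix_fin_maximallyMixed hdB,
    rfl⟩
  simp [hdA.ne']

theorem IsZeroDiscord.smul_add_smul_maximallyMixed (hdA : 0 < dA) (hdB : 0 < dB)
    {ρ : Matrix (Fin dA × Fin dB) (Fin dA × Fin dB) ℂ} (hρ : IsZeroDiscord ρ) {t : ℝ}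
    (ht : t ∈ Set.Icc (0 : ℝ) 1) :
    IsZeroDiscord (((1 - t : ℝ) : ℂ) • ρ +
      (t : ℂ) • (((dA * dB : ℕ) : ℂ)⁻¹ • (1 : Matrix (Fin dA × Fin dB) (Fin dA × Fin dB) ℂ))) := by
  obtain ⟨v, p, σ, hv, hp, hp1, hσ, rfl⟩ := hρ
  obtain ⟨ω, hω, hmix⟩ := exists_smul_cqState_add_smul_cqState v hp
    (p' := fun _ => (dA : ℝ)⁻¹) (fun _ => by positivity) hσ
    (fun _ => isDensityMatrix_fin_maximallyMixed hdB) (sub_nonneg.2 ht.2) ht.1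
  rw [← cqState_fin_maximallyMixed hv]
  refine ⟨v, _, ω, hv, fun j => ?_, ?_, hω, hmix⟩
  · exact add_nonneg (mul_nonneg (sub_nonneg.2 ht.2) (hp j)) (mul_nonneg ht.1 (by positivity))
  · have : (dA : ℝ) ≠ 0 := by positivity
    simp only [Pi.add_apply, Pi.smul_apply, smul_eq_mul, Finset.sum_add_distrib, ← Finset.mul_sum,
      hp1, Finset.sum_const, Finset.card_univ, Fintype.card_fin, nsmul_eq_mul]
    field_simp
    ring

end ZeroDiscord

/-- The set `Ω₀` of zero-discord states is star-shaped with
respect to the maximally mixed state `I/d`, and consequently it is a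
path-connected subset of matrix space. -/
theorem Omega0_starShaped_pathConnected (dA dB : ℕ) (hdA : 0 < dA) (hdB : 0 < dB) :
    (∀ (ρ : Matrix (Fin dA × Fin dB) (Fin dA × Fin dB) ℂ), IsZeroDiscord ρ →
      ∀ t : ℝ, t ∈ Set.Icc (0 : ℝ) 1 →
        IsZeroDiscord (((1 - t : ℝ) : ℂ) • ρ +
          (t : ℂ) • ((((dA * dB : ℕ) : ℂ))⁻¹ •
            (1 : Matrix (Fin dA × Fin dB) (Fin dA × Fin dB) ℂ)))) ∧
    IsPathConnected {ρ : Matrix (Fin dA × Fin dB) (Fin dA × Fin dB) ℂ | IsZeroDiscord ρ} := by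
  have hstar := fun ρ (hρ : IsZeroDiscord ρ) t ht =>
    IsZeroDiscord.smul_add_smul_maximallyMixed hdA hdB hρ (t := t) ht
  refine ⟨hstar, StarConvex.isPathConnected ?_ (isZeroDiscord_maximallyMixed hdA hdB)⟩
  intro ρ hρ a b ha hb hab
  obtain rfl : b = 1 - a := by linarith
  simpa only [Set.mem_ofPred_eq, Complex.coe_smul, add_comm] using
    hstar ρ hρ a ⟨ha, sub_nonneg.1 hb⟩
end

section
/- Let Φ be a ℂ-linear endomorphism of the space of d×d complex matrices (indexed by Fin dA × Fin dB) that is diagonalizable (there is a basis of the matrix space consisting of eigenvectors of Φ) and all of whose eigenvalues are nonzero. If a density matrix ρ satisfies [ρ, (Tr_B ρ) ⊗ I_{dB}] ≠ 0, then for every natural number N there exists n > N such that [Φ^n(ρ), (Tr_B Φ^n(ρ)) ⊗ I_{dB}] ≠ 0. In other words, the trajectory (Φ^n(ρ))_n leaves the set C₀ at arbitrarily large times: discord cannot vanish suddenly and permanently at any finite time. -/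
open Matrix MeasureTheory
open scoped Kronecker ComplexOrder

/-! Expand `ρ` in an eigenbasis of `Φ`. As `[X, (Tr_B Y) ⊗ I]` is bilinear in `(X, Y)`, the
commutator along the trajectory is an exponential polynomial `∑ₛ sⁿ • Wₛ` in `n`, whose bases `s`
are products of two eigenvalues, hence nonzero. By Dedekind's independence of the characters
`n ↦ sⁿ` of `(ℕ, +)`, if it vanishes for all `n > N` then every `Wₛ = 0`, so it also vanishes at
`n = 0`, i.e. for `ρ` itself. -/

theorem eq_zero_of_sum_mul_pow_eventually_eq_zero {K : Type*} [Field K] {T : Finset K}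
    (hT : (0 : K) ∉ T) {c : K → K} {N : ℕ}
    (h : ∀ n, N < n → ∑ t ∈ T, c t * t ^ n = 0) : ∀ t ∈ T, c t = 0 := by
  intro t ht
  have hpowers : LinearIndependent K (fun t : K => ⇑(powersHom K t)) :=
    (linearIndependent_monoidHom (Multiplicative ℕ) K).comp _ (powersHom K).injective
  have hshift := linearIndependent_iff'.mp hpowers T (fun t => c t * t ^ (N + 1)) ?_ t ht
  · exact (mul_eq_zero.mp hshift).resolve_right (pow_ne_zero _ (ne_of_mem_of_not_mem ht hT))
  · funext m
    simp only [Finset.sum_apply, Pi.smul_apply, powersHom_apply, smul_eq_mul, Pi.zero_apply]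
    rw [← h (N + 1 + m.toAdd) (by omega)]
    exact Finset.sum_congr rfl fun t _ => by ring

theorem Finset.sum_pow_smul_eq_zero_of_eventually {ι K M : Type*} [Field K] [AddCommGroup M]
    [Module K M] {s : Finset ι} {μ : ι → K} (hμ : ∀ i ∈ s, μ i ≠ 0) {w : ι → M} {N : ℕ}
    (h : ∀ n, N < n → ∑ i ∈ s, μ i ^ n • w i = 0) (n : ℕ) :
    ∑ i ∈ s, μ i ^ n • w i = 0 := by
  classical
  -- grouping the terms by the value of `μ` makes the bases distinct
  set W : K → M := fun t => ∑ i ∈ s with μ i = t, w i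
  have hfiber : ∀ n, ∑ i ∈ s, μ i ^ n • w i = ∑ t ∈ s.image μ, t ^ n • W t := by
    intro n
    rw [← Finset.sum_fiberwise_of_maps_to fun i hi => mem_image_of_mem μ hi]
    refine Finset.sum_congr rfl fun t _ => ?_
    rw [Finset.smul_sum]
    exact Finset.sum_congr rfl fun i hi => by rw [(mem_filter.mp hi).2]
  have hW : ∀ t ∈ s.image μ, W t = 0 := by
    intro t ht
    rw [← Module.forall_dual_apply_eq_zero_iff K]
    intro f
    refine eq_zero_of_sum_mul_pow_eventually_eq_zero (c := fun t => f (W t)) (N := N) ?_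
      (fun n hn => ?_) t ht
    · simpa using hμ
    · simpa [mul_comm] using congrArg f ((hfiber n).symm.trans (h n hn))
  rw [hfiber]
  exact Finset.sum_eq_zero fun t ht => by rw [hW t ht, smul_zero]

theorem Module.End.pow_apply_sum_smul_eigenvectors {ι K M : Type*} [Field K] [AddCommGroup M]
    [Module K M] {Φ : Module.End K M} {s : Finset ι} {v : ι → M} {ev : ι → K}
    (hv : ∀ i ∈ s, Φ.HasEigenvector (ev i) (v i)) (c : ι → K) (n : ℕ) :
    (Φ ^ n) (∑ i ∈ s, c i • v i) = ∑ i ∈ s, (ev i ^ n * c i) • v i := by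
  rw [map_sum]
  exact Finset.sum_congr rfl fun i hi => by
    rw [map_smul, (hv i hi).pow_apply, smul_smul, mul_comm]

theorem LinearMap.apply_eq_zero_of_eventually_apply_pow_eq_zero {ι K M P : Type*} [Field K]
    [AddCommGroup M] [Module K M] [AddCommGroup P] [Module K P]
    {Φ : Module.End K M} {s : Finset ι} {v : ι → M} {ev : ι → K}
    (hv : ∀ i ∈ s, Φ.HasEigenvector (ev i) (v i)) (hev : ∀ i ∈ s, ev i ≠ 0)
    (B : M →ₗ[K] M →ₗ[K] P) (c d : ι → K) {N : ℕ}
    (h : ∀ n, N < n →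
      B ((Φ ^ n) (∑ i ∈ s, c i • v i)) ((Φ ^ n) (∑ j ∈ s, d j • v j)) = 0) :
    B (∑ i ∈ s, c i • v i) (∑ j ∈ s, d j • v j) = 0 := by
  have hexpand : ∀ n, B ((Φ ^ n) (∑ i ∈ s, c i • v i)) ((Φ ^ n) (∑ j ∈ s, d j • v j)) =
      ∑ p ∈ s ×ˢ s, (ev p.1 * ev p.2) ^ n • (c p.1 * d p.2) • B (v p.1) (v p.2) := by
    intro n
    simp only [Module.End.pow_apply_sum_smul_eigenvectors hv, map_sum, map_smul,
      LinearMap.sum_apply, LinearMap.smul_apply, Finset.smul_sum, smul_smul, Finset.sum_product]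
    rw [Finset.sum_comm]
    exact Finset.sum_congr rfl fun i _ => Finset.sum_congr rfl fun j _ => by congr 1; ring
  have hμ : ∀ p ∈ s ×ˢ s, ev p.1 * ev p.2 ≠ 0 := fun p hp =>
    mul_ne_zero (hev _ (Finset.mem_product.mp hp).1) (hev _ (Finset.mem_product.mp hp).2)
  have h0 := (hexpand 0).trans <| Finset.sum_pow_smul_eq_zero_of_eventually hμ
    (fun n hn => (hexpand n).symm.trans (h n hn)) 0
  simpa using h0

noncomputable def ptraceBLinear (dA dB : ℕ) :
    Matrix (Fin dA × Fin dB) (Fin dA × Fin dB) ℂ →ₗ[ℂ] Matrix (Fin dA) (Fin dA) ℂ where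
  toFun := ptraceB
  map_add' x y := by ext; simp [ptraceB, Finset.sum_add_distrib]
  map_smul' c x := by ext; simp [ptraceB, Finset.mul_sum]

noncomputable def commutatorWithReduced (dA dB : ℕ) :
    Matrix (Fin dA × Fin dB) (Fin dA × Fin dB) ℂ →ₗ[ℂ]
      Matrix (Fin dA × Fin dB) (Fin dA × Fin dB) ℂ →ₗ[ℂ]
        Matrix (Fin dA × Fin dB) (Fin dA × Fin dB) ℂ :=
  LinearMap.compl₂
    (LinearMap.mul ℂ (Matrix (Fin dA × Fin dB) (Fin dA × Fin dB) ℂ) -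
      (LinearMap.mul ℂ (Matrix (Fin dA × Fin dB) (Fin dA × Fin dB) ℂ)).flip)
    ((kroneckerBilinear (R := ℂ)).flip (1 : Matrix (Fin dB) (Fin dB) ℂ) ∘ₗ ptraceBLinear dA dB)

theorem commutatorWithReduced_apply {dA dB : ℕ}
    (X Y : Matrix (Fin dA × Fin dB) (Fin dA × Fin dB) ℂ) :
    commutatorWithReduced dA dB X Y =
      X * (ptraceB Y ⊗ₖ (1 : Matrix (Fin dB) (Fin dB) ℂ)) -
        (ptraceB Y ⊗ₖ (1 : Matrix (Fin dB) (Fin dB) ℂ)) * X :=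
  rfl

theorem trajectory_leaves_C0_general (dA dB : ℕ)
    (Φ : Module.End ℂ (Matrix (Fin dA × Fin dB) (Fin dA × Fin dB) ℂ))
    (hdiag : ∃ (ι : Type) (b : Module.Basis ι ℂ (Matrix (Fin dA × Fin dB) (Fin dA × Fin dB) ℂ))
      (ev : ι → ℂ), ∀ i, Φ (b i) = ev i • b i)
    (hev : ∀ lam : ℂ, Module.End.HasEigenvalue Φ lam → lam ≠ 0)
    (ρ : Matrix (Fin dA × Fin dB) (Fin dA × Fin dB) ℂ)
    (hc : ρ * (ptraceB ρ ⊗ₖ (1 : Matrix (Fin dB) (Fin dB) ℂ)) ≠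
      (ptraceB ρ ⊗ₖ (1 : Matrix (Fin dB) (Fin dB) ℂ)) * ρ) :
    ∀ N : ℕ, ∃ n : ℕ, N < n ∧
      (Φ ^ n) ρ * (ptraceB ((Φ ^ n) ρ) ⊗ₖ (1 : Matrix (Fin dB) (Fin dB) ℂ)) ≠
        (ptraceB ((Φ ^ n) ρ) ⊗ₖ (1 : Matrix (Fin dB) (Fin dB) ℂ)) * (Φ ^ n) ρ := by
  intro N
  by_contra! hC0
  obtain ⟨ι, b, ev, hΦ⟩ := hdiag
  have : Fintype ι := FiniteDimensional.fintypeBasisIndex b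
  have hv : ∀ i ∈ Finset.univ, Φ.HasEigenvector (ev i) (b i) := fun i _ =>
    ⟨Module.End.mem_eigenspace_iff.mpr (hΦ i), b.ne_zero i⟩
  have hρ : ∑ i, b.repr ρ i • b i = ρ := b.sum_repr ρ
  refine hc (sub_eq_zero.mp ?_)
  rw [← commutatorWithReduced_apply, ← hρ]
  refine LinearMap.apply_eq_zero_of_eventually_apply_pow_eq_zero hv
    (fun i hi => hev _ (Module.End.hasEigenvalue_of_hasEigenvector (hv i hi))) _ _ _ (N := N)
    (fun n hn => ?_)
  rw [hρ, commutatorWithReduced_apply, hC0 n hn, sub_self]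

/-- Let `Φ` be a diagonalizable linear endomorphism of the
space of bipartite matrices all of whose eigenvalues are nonzero. If a density
matrix `ρ` has nonvanishing commutator with its reduced state, then the
trajectory `(Φ^n ρ)_n` leaves `C₀` at arbitrarily large times: discord cannot
vanish suddenly and permanently at any finite time. -/
theorem trajectory_leaves_C0 (dA dB : ℕ) (hdA : 0 < dA) (hdB : 0 < dB)
    (Φ : Module.End ℂ (Matrix (Fin dA × Fin dB) (Fin dA × Fin dB) ℂ))
    (hdiag : ∃ (ι : Type) (b : Module.Basis ι ℂ (Matrix (Fin dA × Fin dB) (Fin dA × Fin dB) ℂ))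
      (ev : ι → ℂ), ∀ i, Φ (b i) = ev i • b i)
    (hev : ∀ lam : ℂ, Module.End.HasEigenvalue Φ lam → lam ≠ 0)
    (ρ : Matrix (Fin dA × Fin dB) (Fin dA × Fin dB) ℂ) (hρ : IsDensityMatrix ρ)
    (hc : ρ * (ptraceB ρ ⊗ₖ (1 : Matrix (Fin dB) (Fin dB) ℂ)) ≠
      (ptraceB ρ ⊗ₖ (1 : Matrix (Fin dB) (Fin dB) ℂ)) * ρ) :
    ∀ N : ℕ, ∃ n : ℕ, N < n ∧
      (Φ ^ n) ρ * (ptraceB ((Φ ^ n) ρ) ⊗ₖ (1 : Matrix (Fin dB) (Fin dB) ℂ)) ≠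
        (ptraceB ((Φ ^ n) ρ) ⊗ₖ (1 : Matrix (Fin dB) (Fin dB) ℂ)) * (Φ ^ n) ρ :=
  trajectory_leaves_C0_general dA dB Φ hdiag hev ρ hc
end

section
/- Let dA = dB = 2 and let ρ be the two-qubit maximally entangled Bell state, i.e. the 4×4 matrix indexed by Fin 2 × Fin 2 with entries ρ_{(i,i'),(j,j')} = (1/2)·δ_{i,i'}·δ_{j,j'} (the projector onto (|00⟩+|11⟩)/√2). Then ρ satisfies [ρ, (Tr_B ρ) ⊗ I₂] = 0 (so ρ ∈ C₀), but ρ is not a zero-discord state: there exist no orthonormal basis (v_j) of ℂ², nonnegative reals p_j summing to 1, and 2×2 density matrices σ_j with ρ = Σ_j p_j (v_j v_j*) ⊗ σ_j. Hence the inclusion Ω₀ ⊆ C₀ is strict. -/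
open Matrix MeasureTheory
open scoped Kronecker ComplexOrder

/-- The two-qubit Bell state `(|00⟩ + |11⟩)/√2` as a density matrix:
`ρ_{(i,i'),(j,j')} = (1/2)·δ_{i,i'}·δ_{j,j'}`. -/
noncomputable def bellState : Matrix (Fin 2 × Fin 2) (Fin 2 × Fin 2) ℂ :=
  Matrix.of fun p q => if p.1 = p.2 ∧ q.1 = q.2 then (1 / 2 : ℂ) else 0

/-!
A zero-discord state is a convex combination of products `P ⊗ σ` of positive semidefinite
matrices, so its partial transpose on `B` is again positive semidefinite (Peres). The partial
transpose of the Bell state vanishes on the diagonal at `(0,1)` but has the entry `1/2` in that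
column, which is impossible for a positive semidefinite matrix. Membership in `C₀` is immediate:
the reduced state of the Bell state is `I/2`, so `(Tr_B ρ) ⊗ I` is a scalar matrix.
-/

namespace Matrix

variable {m n R : Type*}

def partialTransposeB (ρ : Matrix (m × n) (m × n) R) : Matrix (m × n) (m × n) R :=
  of fun p q => ρ (p.1, q.2) (q.1, p.2)

lemma partialTransposeB_sum_smul_kronecker [CommSemiring R] {ι : Type*} [Fintype ι]
    (c : ι → R) (A : ι → Matrix m m R) (B : ι → Matrix n n R) :
    partialTransposeB (∑ j, c j • (A j ⊗ₖ B j)) = ∑ j, c j • (A j ⊗ₖ (B j)ᵀ) := by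
  ext p q
  simp [partialTransposeB, sum_apply]

lemma PosSemidef.apply_eq_zero_of_diag_eq_zero {𝕜 : Type*} [RCLike 𝕜] [Fintype n]
    [DecidableEq n] {A : Matrix n n 𝕜} (hA : A.PosSemidef) {i : n} (hi : A i i = 0) (j : n) : A j i = 0 := by
  have h := (hA.dotProduct_mulVec_zero_iff (Pi.single i 1)).mp (by simp [hi])
  simpa using congrFun h j

end Matrix

lemma IsZeroDiscord.posSemidef_partialTransposeB {dA dB : ℕ}
    {ρ : Matrix (Fin dA × Fin dB) (Fin dA × Fin dB) ℂ} (hρ : IsZeroDiscord ρ) :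
    (partialTransposeB ρ).PosSemidef := by
  obtain ⟨v, p, σ, -, hp, -, hσ, rfl⟩ := hρ
  rw [partialTransposeB_sum_smul_kronecker]
  refine posSemidef_sum _ fun j _ => ?_
  exact ((posSemidef_vecMulVec_self_star (v j)).kronecker (hσ j).1.transpose).smul
    (Complex.zero_le_real.mpr (hp j))

lemma bellState_eq_smul_vecMulVec :
    bellState = (1 / 2 : ℂ) • vecMulVec (fun p : Fin 2 × Fin 2 => if p.1 = p.2 then 1 else 0)
      (star fun p : Fin 2 × Fin 2 => if p.1 = p.2 then 1 else 0) := by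
  ext p q
  by_cases hp : p.1 = p.2 <;> simp [bellState, vecMulVec_apply, hp]

lemma bellState_posSemidef : bellState.PosSemidef := by
  rw [bellState_eq_smul_vecMulVec]
  exact (posSemidef_vecMulVec_self_star _).smul (by positivity)

lemma trace_bellState : bellState.trace = 1 := by
  simp [trace, bellState, Fintype.sum_prod_type]

lemma ptraceB_bellState : ptraceB bellState = (1 / 2 : ℂ) • 1 := by
  ext a a'
  fin_cases a <;> fin_cases a' <;> simp [ptraceB, bellState]

lemma bellState_not_zeroDiscord : ¬ IsZeroDiscord bellState := by
  intro h
  have hcol := h.posSemidef_partialTransposeB.apply_eq_zero_of_diag_eq_zero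
    (i := (0, 1)) (by simp [partialTransposeB, bellState]) (1, 0)
  norm_num [partialTransposeB, bellState] at hcol

/-- The Bell state is a density matrix that commutes with
its reduced state tensored with the identity (so it belongs to `C₀`), yet it
is not a zero-discord state. Hence the inclusion `Ω₀ ⊆ C₀` is strict. -/
theorem bellState_in_C0_not_zeroDiscord :
    IsDensityMatrix bellState ∧
    bellState * (ptraceB bellState ⊗ₖ (1 : Matrix (Fin 2) (Fin 2) ℂ)) =
      (ptraceB bellState ⊗ₖ (1 : Matrix (Fin 2) (Fin 2) ℂ)) * bellState ∧
    ¬ IsZeroDiscord bellState := by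
  refine ⟨⟨bellState_posSemidef, trace_bellState⟩, ?_, bellState_not_zeroDiscord⟩
  rw [ptraceB_bellState, smul_kronecker, one_kronecker_one]
  exact ((Commute.one_right _).smul_right _).eq
end
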